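/- Let H : ℝ → ℝ be a bounded C⁴ function with H(0) = 0, H even, and C_4 := max_{0≤p≤4} sup_η |H^{(p)}(η)| < ∞, with H not identically zero. Then 2 D_1(H, 0) ≤ sup_η |H''(η)| ≤ C_4, and consequently for every a ≥ 0, D_1(H, a) ≥ (2 D_1(H, 0)² / C_4) · 1/(3a² + 4). -/

import Mathlib

/-!
Write `D = D₁(H, 0)` and `C = C₄`. Since `H` is even, its odd derivatives vanish at `0`, so the
Lagrange form of Taylor's theorem gives `|H t| ≤ (sup |H''| / 2) t²`, i.e. `2D ≤ sup |H''|`, and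
`|H t - H''(0) t² / 2| ≤ C t⁴ / 24`. For the bound on `D₁(H, a)` it suffices to find `t ≠ 0` with
`|H t| ≥ D² / C` and `4 |H t| ≥ D t²`. Take `t₀` with `|H t₀| ≥ D t₀² / 2`. If `t₀² ≥ 2D / C`,
then `t₀` works. Otherwise the quartic bound at `t₀` forces `|H''(0)| > 5D / 6`, and then the same
bound shows that the point `t` with `t² = 4D / C` works.
-/

open MeasureTheory Real Filter

noncomputable section

/-- `D_N(H,a) = sup_{η ≠ 0} |Σⱼ H(ηⱼ) Γ_{N-1}(η^j)| / (a² + |η|²)`, where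
`Γ_{N-1}(η^j) = ∏_{i≠j} e^{-π ηᵢ²}`. -/
def DN (N : ℕ) (H : ℝ → ℝ) (a : ℝ) : ℝ :=
  ⨆ η : {η : Fin N → ℝ // η ≠ 0},
    |∑ j, H (η.1 j) * ∏ i ∈ Finset.univ.erase j, Real.exp (-Real.pi * (η.1 i) ^ 2)| /
      (a ^ 2 + ∑ i, (η.1 i) ^ 2)

/-- `C₄ = max_{p ≤ 4} sup_η |H⁽ᵖ⁾(η)|`. -/
def derivBound4 (H : ℝ → ℝ) : ℝ :=
  ⨆ p : Fin 5, ⨆ η : ℝ, |iteratedDeriv (p : ℕ) H η|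

instance : Nonempty {t : ℝ // t ≠ 0} := ⟨⟨1, one_ne_zero⟩⟩

open Nat in
theorem taylorWithinEval_uIcc_eq_sum {f : ℝ → ℝ} {n : ℕ} (hf : ContDiff ℝ n f) {x₀ x : ℝ}
    (hx : x₀ ≠ x) :
    taylorWithinEval f n (Set.uIcc x₀ x) x₀ x =
      ∑ k ∈ Finset.range (n + 1), iteratedDeriv k f x₀ / k ! * (x - x₀) ^ k := by
  rw [taylor_within_apply]
  refine Finset.sum_congr rfl fun k hk => ?_
  have hkn : (k : WithTop ℕ∞) ≤ n := by
    exact_mod_cast Nat.lt_succ_iff.mp (Finset.mem_range.mp hk)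
  rw [iteratedDerivWithin_eq_iteratedDeriv (uniqueDiffOn_uIcc hx)
    ((hf.of_le hkn).contDiffAt) Set.left_mem_uIcc, smul_eq_mul]
  ring

open Nat in
theorem abs_sub_taylor_le {f : ℝ → ℝ} {n : ℕ} (hf : ContDiff ℝ (n + 1) f) {S : ℝ}
    (hS : ∀ y, |iteratedDeriv (n + 1) f y| ≤ S) (x₀ x : ℝ) :
    |f x - ∑ k ∈ Finset.range (n + 1), iteratedDeriv k f x₀ / k ! * (x - x₀) ^ k| ≤
      S / (n + 1)! * |x - x₀| ^ (n + 1) := by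
  rcases eq_or_ne x₀ x with rfl | hx
  · simp [Finset.sum_range_succ']
  obtain ⟨y, -, hy⟩ := taylor_mean_remainder_lagrange_iteratedDeriv hx hf.contDiffOn
  rw [← taylorWithinEval_uIcc_eq_sum (hf.of_le (by norm_cast; omega)) hx, hy, abs_div,
    abs_mul, abs_pow, Nat.abs_cast, div_mul_eq_mul_div]
  gcongr
  exact hS y

theorem iteratedDeriv_odd_eq_zero_of_even {f : ℝ → ℝ} (hf : Function.Even f) {n : ℕ}
    (hn : Odd n) : iteratedDeriv n f 0 = 0 := by
  have h := iteratedDeriv_comp_neg n f 0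
  rw [show (fun x => f (-x)) = f from funext hf, neg_zero, hn.neg_one_pow, neg_one_smul] at h
  linarith

theorem abs_iteratedDeriv_le_derivBound4 {H : ℝ → ℝ}
    (hbdd : ∀ p : Fin 5, BddAbove (Set.range fun η => |iteratedDeriv (p : ℕ) H η|))
    (p : Fin 5) (η : ℝ) : |iteratedDeriv p H η| ≤ derivBound4 H :=
  (le_ciSup (hbdd p) η).trans <| le_ciSup (f := fun p : Fin 5 => ⨆ η, |iteratedDeriv (p : ℕ) H η|)
    (Set.finite_range _).bddAbove p

theorem iSup_abs_iteratedDeriv_le_derivBound4 {H : ℝ → ℝ}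
    (hbdd : ∀ p : Fin 5, BddAbove (Set.range fun η => |iteratedDeriv (p : ℕ) H η|))
    (p : Fin 5) : ⨆ η, |iteratedDeriv p H η| ≤ derivBound4 H :=
  ciSup_le (abs_iteratedDeriv_le_derivBound4 hbdd p)

theorem DN_one_eq (H : ℝ → ℝ) (a : ℝ) :
    DN 1 H a = ⨆ t : {t : ℝ // t ≠ 0}, |H t| / (a ^ 2 + t ^ 2) := by
  let e : {η : Fin 1 → ℝ // η ≠ 0} ≃ {t : ℝ // t ≠ 0} :=
    (Equiv.funUnique (Fin 1) ℝ).subtypeEquiv fun η => by simp [funext_iff]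
  rw [DN, ← e.iSup_comp]
  simp [e]

theorem DN_one_nonneg (H : ℝ → ℝ) (a : ℝ) : 0 ≤ DN 1 H a := by
  rw [DN_one_eq]
  exact Real.iSup_nonneg fun t => by positivity

section QuadraticBound

variable {H : ℝ → ℝ} {K : ℝ} (hK : ∀ t, |H t| ≤ K * t ^ 2)
include hK

theorem DN_one_zero_le : DN 1 H 0 ≤ K := by
  rw [DN_one_eq]
  refine ciSup_le fun t => ?_
  rw [div_le_iff₀ (by have := t.2; positivity)]
  simpa using hK t

theorem div_le_DN_one {t : ℝ} (ht : t ≠ 0) (a : ℝ) : |H t| / (a ^ 2 + t ^ 2) ≤ DN 1 H a := by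
  rw [DN_one_eq]
  refine le_ciSup (f := fun t : {t : ℝ // t ≠ 0} => |H t| / (a ^ 2 + t ^ 2)) ⟨K, ?_⟩ ⟨t, ht⟩
  rintro _ ⟨⟨s, hs⟩, rfl⟩
  have hs2 : 0 < s ^ 2 := by positivity
  calc |H s| / (a ^ 2 + s ^ 2) ≤ |H s| / s ^ 2 := by gcongr; nlinarith [sq_nonneg a]
    _ ≤ K := (div_le_iff₀ hs2).mpr (hK s)

end QuadraticBound

theorem exists_lt_DN_one_zero {H : ℝ → ℝ} {r : ℝ} (hr : r < DN 1 H 0) :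
    ∃ t ≠ 0, r * t ^ 2 < |H t| := by
  rw [DN_one_eq] at hr
  obtain ⟨⟨t, ht⟩, hrt⟩ := exists_lt_of_lt_ciSup hr
  have ht2 : 0 < t ^ 2 := by positivity
  exact ⟨t, ht, by simpa [lt_div_iff₀ ht2] using hrt⟩

theorem two_mul_sq_div_mul_le_div {C D x y : ℝ} (hD : 0 ≤ D) (hDC : 2 * D ≤ C) (hC : 0 < C)
    (hx : 0 < x) (hy : D ^ 2 / C ≤ y) (hxy : D * x ≤ 4 * y) (a : ℝ) :
    2 * D ^ 2 / C * (1 / (3 * a ^ 2 + 4)) ≤ y / (a ^ 2 + x) := by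
  have hy' : D ^ 2 ≤ y * C := (div_le_iff₀ hC).mp hy
  rw [div_mul_div_comm, mul_one, div_le_div_iff₀ (by positivity) (by positivity)]
  nlinarith [mul_le_mul_of_nonneg_left hDC (mul_nonneg hD hx.le), sq_nonneg a,
    mul_le_mul_of_nonneg_right hy' (sq_nonneg a), mul_le_mul_of_nonneg_right hxy hC.le]

theorem exists_sq_div_le_abs {H : ℝ → ℝ} {b C D : ℝ} (hD : 0 < D) (hDC : 2 * D ≤ C)
    (hH : ∀ t, |H t - b * t ^ 2| ≤ C / 24 * t ^ 4) {t₀ : ℝ} (ht₀ : t₀ ≠ 0)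
    (hHt₀ : D / 2 * t₀ ^ 2 ≤ |H t₀|) :
    ∃ t ≠ 0, D ^ 2 / C ≤ |H t| ∧ D * t ^ 2 ≤ 4 * |H t| := by
  have hC : 0 < C := by linarith
  by_cases hfar : 2 * D / C ≤ t₀ ^ 2
  · refine ⟨t₀, ht₀, ?_, by nlinarith [sq_nonneg t₀]⟩
    calc D ^ 2 / C = D / 2 * (2 * D / C) := by ring
      _ ≤ D / 2 * t₀ ^ 2 := by gcongr
      _ ≤ |H t₀| := hHt₀
  push Not at hfar
  have habs : ∀ t, |(b * t ^ 2)| = |b| * t ^ 2 := fun t => by rw [abs_mul, abs_sq]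
  have hb : 5 / 12 * D < |b| := by
    have hupper := (abs_sub_abs_le_abs_sub _ _).trans (hH t₀)
    rw [habs] at hupper
    have ht₀2 : 0 < t₀ ^ 2 := by positivity
    have hCt₀ : C * t₀ ^ 2 < 2 * D := by rwa [lt_div_iff₀ hC, mul_comm] at hfar
    nlinarith [mul_lt_mul_of_pos_right hCt₀ ht₀2]
  set t := √(4 * D / C)
  have ht2 : t ^ 2 = 4 * D / C := Real.sq_sqrt (by positivity)
  have hlower := (abs_sub_abs_le_abs_sub _ _).trans ((abs_sub_comm _ _).trans_le (hH t))
  rw [habs, show t ^ 4 = (t ^ 2) ^ 2 by ring, ht2] at hlower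
  have hHt : D ^ 2 / C ≤ |H t| := by
    have : D ^ 2 / C ≤ |b| * (4 * D / C) - C / 24 * (4 * D / C) ^ 2 := by
      field_simp
      nlinarith
    linarith
  have ht : t ≠ 0 := (Real.sqrt_pos.mpr (by positivity)).ne'
  refine ⟨t, ht, hHt, ?_⟩
  calc D * t ^ 2 = 4 * (D ^ 2 / C) := by rw [ht2]; ring
    _ ≤ 4 * |H t| := by gcongr

section EvenFunction

variable {f : ℝ → ℝ} {S : ℝ} (heven : Function.Even f) (hf0 : f 0 = 0)
include heven hf0

theorem abs_le_sq_of_even (hf : ContDiff ℝ 2 f) (hS : ∀ y, |iteratedDeriv 2 f y| ≤ S) (t : ℝ) :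
    |f t| ≤ S / 2 * t ^ 2 := by
  have h := abs_sub_taylor_le (n := 1) hf hS 0 t
  simpa [Finset.sum_range_succ, hf0, iteratedDeriv_odd_eq_zero_of_even heven odd_one] using h

theorem abs_sub_sq_le_of_even (hf : ContDiff ℝ 4 f) (hS : ∀ y, |iteratedDeriv 4 f y| ≤ S)
    (t : ℝ) : |f t - iteratedDeriv 2 f 0 / 2 * t ^ 2| ≤ S / 24 * t ^ 4 := by
  have h := abs_sub_taylor_le (n := 3) hf hS 0 t
  simpa [Finset.sum_range_succ, hf0, iteratedDeriv_odd_eq_zero_of_even heven odd_one,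
    iteratedDeriv_odd_eq_zero_of_even heven (by decide : Odd 3), Nat.factorial,
    (by decide : Even 4).pow_abs] using h

end EvenFunction

theorem D1_lower_bound'_general (H : ℝ → ℝ) (hC : ContDiff ℝ 4 H)
    (hbdd : ∀ p : Fin 5, BddAbove (Set.range fun η => |iteratedDeriv (p : ℕ) H η|))
    (hH0 : H 0 = 0) (heven : ∀ η, H η = H (-η)) :
    (2 * DN 1 H 0 ≤ ⨆ η : ℝ, |iteratedDeriv 2 H η|) ∧
    ((⨆ η : ℝ, |iteratedDeriv 2 H η|) ≤ derivBound4 H) ∧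
    (∀ a : ℝ, 0 ≤ a →
      2 * DN 1 H 0 ^ 2 / derivBound4 H * (1 / (3 * a ^ 2 + 4)) ≤ DN 1 H a) := by
  have hev : Function.Even H := fun η => (heven η).symm
  set S := ⨆ η : ℝ, |iteratedDeriv 2 H η|
  have hquad : ∀ t, |H t| ≤ S / 2 * t ^ 2 :=
    abs_le_sq_of_even hev hH0 (hC.of_le (by norm_num)) (le_ciSup (hbdd 2))
  have hquart := abs_sub_sq_le_of_even hev hH0 hC (abs_iteratedDeriv_le_derivBound4 hbdd 4)
  have hSC : S ≤ derivBound4 H := iSup_abs_iteratedDeriv_le_derivBound4 hbdd 2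
  have hDS : DN 1 H 0 ≤ S / 2 := DN_one_zero_le hquad
  refine ⟨by linarith, hSC, fun a _ => ?_⟩
  rcases (DN_one_nonneg H 0).eq_or_lt with hD | hD
  · simpa [← hD] using DN_one_nonneg H a
  obtain ⟨t₀, ht₀, hHt₀⟩ := exists_lt_DN_one_zero (half_lt_self hD)
  obtain ⟨t, ht, hHt, hHt'⟩ := exists_sq_div_le_abs hD (by linarith) hquart ht₀ hHt₀.le
  calc 2 * DN 1 H 0 ^ 2 / derivBound4 H * (1 / (3 * a ^ 2 + 4)) ≤ |H t| / (a ^ 2 + t ^ 2) :=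
        two_mul_sq_div_mul_le_div hD.le (by linarith) (by linarith) (by positivity) hHt hHt' a
    _ ≤ DN 1 H a := div_le_DN_one hquad ht a

/-- **Eq. (4.43)**: `2 D₁(H,0) ≤ sup_η |H''(η)| ≤ C₄`, hence
`D₁(H,a) ≥ (2 D₁(H,0)²/C₄) · 1/(3a² + 4)`. -/
theorem D1_lower_bound' (H : ℝ → ℝ) (hC : ContDiff ℝ 4 H)
    (hbdd : ∀ p : Fin 5, BddAbove (Set.range fun η => |iteratedDeriv (p : ℕ) H η|))
    (hH0 : H 0 = 0) (heven : ∀ η, H η = H (-η))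
    (hne : ∃ η, H η ≠ 0) :
    (2 * DN 1 H 0 ≤ ⨆ η : ℝ, |iteratedDeriv 2 H η|) ∧
    ((⨆ η : ℝ, |iteratedDeriv 2 H η|) ≤ derivBound4 H) ∧
    (∀ a : ℝ, 0 ≤ a →
      2 * DN 1 H 0 ^ 2 / derivBound4 H * (1 / (3 * a ^ 2 + 4)) ≤ DN 1 H a) :=
  D1_lower_bound'_general H hC hbdd hH0 heven
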